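/- arXiv:1706.01268 — 7 statements merged into one kernel-verified Lean document; each statement's English description precedes it below -/
import Mathlib

section
/- Let D1, D2, D3 be elements of S(T) all lying in the same connected component of S(T) (in the standard topology of V). Then T(D1, D2, D3) > 0. -/
/-- A quadratic form (given as a function) on a real vector space is *Lorentzian*
if it is negative definite on some linear subspace of codimension 1 and takes a
positive value somewhere. -/
def IsLorentzian {V : Type*} [AddCommGroup V] [Module ℝ V] (Q : V → ℝ) : Prop :=
  (∃ H : Submodule ℝ V, Module.finrank ℝ (V ⧸ H) = 1 ∧ ∀ v ∈ H, v ≠ 0 → Q v < 0) ∧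
  (∃ v : V, Q v > 0)

/-- The positive index set of a symmetric trilinear form `T`. -/
def posIndexSet {V : Type*} [AddCommGroup V] [Module ℝ V]
    (T : V →ₗ[ℝ] V →ₗ[ℝ] V →ₗ[ℝ] ℝ) : Set V :=
  {D : V | T D D D > 0 ∧ IsLorentzian (fun L => T D L L)}

/-- Key fact: if `Q_A` is Lorentzian, `Q_A(u) > 0` and `v ≠ 0` is `B_A`-orthogonal to `u`,
then `Q_A(v) < 0`. -/
lemma key_orth {V : Type*} [AddCommGroup V] [Module ℝ V]
    (T : V →ₗ[ℝ] V →ₗ[ℝ] V →ₗ[ℝ] ℝ)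
    (hT2 : ∀ x y z : V, T x y z = T x z y)
    (A u v : V) (hL : IsLorentzian (fun L => T A L L))
    (hu : 0 < T A u u) (hv : v ≠ 0) (h0 : T A u v = 0) : T A v v < 0 := by
  obtain ⟨⟨H, hH1, hHneg⟩, -⟩ := hL
  have hu0 : u ≠ 0 := by
    rintro rfl; simp at hu
  have huH : u ∉ H := fun hmem => absurd (hHneg u hmem hu0) (by simp only; linarith)
  have hmku : (Submodule.Quotient.mk u : V ⧸ H) ≠ 0 := by
    simpa [Submodule.Quotient.mk_eq_zero] using huH
  obtain ⟨t, ht⟩ := (finrank_eq_one_iff_of_nonzero' (Submodule.Quotient.mk u : V ⧸ H) hmku).mp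
    hH1 (Submodule.Quotient.mk v)
  have hmem : v - t • u ∈ H := by
    rw [← Submodule.Quotient.mk_eq_zero]
    rw [Submodule.Quotient.mk_sub, Submodule.Quotient.mk_smul, ht, sub_self]
  set h := v - t • u with hh
  have hvdecomp : v = h + t • u := by rw [hh]; abel
  have hexp : T A v v = T A h h + t * T A h u + t * T A u h + t * t * T A u u := by
    rw [hvdecomp]
    simp [map_add, map_smul, LinearMap.add_apply, LinearMap.smul_apply, smul_eq_mul]
    ring
  have h0' : T A u h + t * T A u u = 0 := by
    have : T A u v = T A u h + t * T A u u := by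
      rw [hvdecomp]; simp [map_add, map_smul, smul_eq_mul]
    linarith [h0, this.symm]
  have hsymm : T A h u = T A u h := by rw [hT2 A u h]
  by_cases hhz : h = 0
  · -- v = t • u, contradiction with h0
    have htz : t ≠ 0 := by
      rintro rfl; apply hv; rw [hvdecomp, hhz]; simp
    exfalso
    have : T A u v = t * T A u u := by
      rw [hvdecomp, hhz]; simp [map_smul, smul_eq_mul]
    rw [h0] at this
    exact htz (by nlinarith)
  · have hneg : T A h h < 0 := hHneg h hmem hhz
    have : T A u h = - (t * T A u u) := by linarith
    rw [hexp, hsymm, this]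
    nlinarith [sq_nonneg t, hu]

/-- Sign propagation: a continuous nonvanishing function on a preconnected set keeps its sign. -/
lemma pos_on_preconnected {X : Type*} [TopologicalSpace X] {s : Set X}
    (hs : IsPreconnected s) {f : X → ℝ} (hf : ContinuousOn f s)
    (hne : ∀ x ∈ s, f x ≠ 0) {a b : X} (ha : a ∈ s) (hb : b ∈ s) (hfa : 0 < f a) :
    0 < f b := by
  rcases lt_trichotomy (f b) 0 with hlt | heq | hgt
  · exfalso
    have : (0 : ℝ) ∈ Set.Icc (f b) (f a) := ⟨le_of_lt hlt, le_of_lt hfa⟩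
    obtain ⟨x, hx, hfx⟩ := hs.intermediate_value hb ha hf this
    exact hne x hx hfx
  · exact absurd heq (hne b hb)
  · exact hgt

theorem stmt0
    (V : Type*) [NormedAddCommGroup V] [NormedSpace ℝ V] [FiniteDimensional ℝ V]
    (T : V →ₗ[ℝ] V →ₗ[ℝ] V →ₗ[ℝ] ℝ)
    (hT1 : ∀ x y z : V, T x y z = T y x z)
    (hT2 : ∀ x y z : V, T x y z = T x z y)
    (D1 D2 D3 : V)
    (h1 : D1 ∈ posIndexSet T)
    (h2 : D2 ∈ connectedComponentIn (posIndexSet T) D1)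
    (h3 : D3 ∈ connectedComponentIn (posIndexSet T) D1) :
    T D1 D2 D3 > 0 := by
  set C := connectedComponentIn (posIndexSet T) D1 with hC
  have hC1 : D1 ∈ C := mem_connectedComponentIn h1
  have hCsub : C ⊆ posIndexSet T := connectedComponentIn_subset _ _
  have hCconn : IsPreconnected C := isPreconnected_connectedComponentIn
  -- continuity of B ↦ T D1 B B
  have hquadcont : ∀ A : V, Continuous fun B : V => T A B B := by
    intro A
    have hL : Continuous fun B : V =>
        (LinearMap.toContinuousLinearMap (T A B) : V →L[ℝ] ℝ) :=
      ((LinearMap.toContinuousLinearMap : (V →ₗ[ℝ] ℝ) ≃ₗ[ℝ] (V →L[ℝ] ℝ)).toLinearMap.comp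
        (T A)).continuous_of_finiteDimensional
    have := isBoundedBilinearMap_apply.continuous.comp (hL.prodMk continuous_id)
    exact this
  -- nonzero elements
  have hne0 : ∀ B ∈ posIndexSet T, B ≠ 0 := by
    rintro B hB rfl
    have := hB.1
    simp [posIndexSet] at this
  -- symmetry helper: T x y z = T z x y etc.
  have hsym3 : ∀ x y z : V, T x y z = T y z x := by
    intro x y z; rw [hT1 x y z, hT2 y x z]
  -- Stage 1: for all B ∈ C, 0 < T D1 B B and 0 < T D1 D1 B
  have stage1 : ∀ B ∈ C, 0 < T D1 B B ∧ 0 < T D1 D1 B := by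
    have hfc : Continuous fun B : V => min (T D1 B B) (T D1 D1 B) :=
      (hquadcont D1).min (T D1 D1).continuous_of_finiteDimensional
    have hne : ∀ B ∈ C, min (T D1 B B) (T D1 D1 B) ≠ 0 := by
      intro B hBC h0
      have hB : B ∈ posIndexSet T := hCsub hBC
      have ha : 0 ≤ T D1 B B := by
        have := min_le_left (T D1 B B) (T D1 D1 B); rw [h0] at this; linarith
      have hb : 0 ≤ T D1 D1 B := by
        have := min_le_right (T D1 B B) (T D1 D1 B); rw [h0] at this; linarith
      rcases min_eq_iff.mp h0 with ⟨haz, -⟩ | ⟨hbz, -⟩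
      · -- T D1 B B = 0 : use Q_B with u = B, v = D1
        have hkey := key_orth T hT2 B B D1 hB.2 hB.1 (hne0 D1 h1)
          (by rw [hsym3 B B D1, hsym3 B D1 B]; exact haz)
        -- T B D1 D1 < 0, but T B D1 D1 = T D1 D1 B
        rw [hsym3 B D1 D1] at hkey
        -- hkey : T D1 D1 B < 0
        linarith
      · -- T D1 D1 B = 0 : use Q_{D1} with u = D1, v = B
        have hkey := key_orth T hT2 D1 D1 B h1.2 h1.1 (hne0 B hB) hbz
        linarith
    intro B hBC
    have hpos := pos_on_preconnected hCconn hfc.continuousOn hne hC1 hBC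
      (by simpa using h1.1)
    constructor
    · exact lt_of_lt_of_le hpos (min_le_left _ _)
    · exact lt_of_lt_of_le hpos (min_le_right _ _)
  -- Stage 2: g B = T D1 D2 B is nonzero on C, positive at D2
  have hgcont : Continuous fun B : V => T D1 D2 B :=
    (T D1 D2).continuous_of_finiteDimensional
  have hgne : ∀ B ∈ C, T D1 D2 B ≠ 0 := by
    intro B hBC hg0
    have hkey := key_orth T hT2 D1 D2 B h1.2 (stage1 D2 h2).1 (hne0 B (hCsub hBC)) hg0
    linarith [(stage1 B hBC).1]
  have := pos_on_preconnected hCconn hgcont.continuousOn hgne h2 h3 (stage1 D2 h2).1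
  exact this
end

section
/- Let D1 and D2 lie in the same connected component of S(T) and let t ∈ [0,1]. Then the convex combination D = t·D1 + (1−t)·D2 satisfies T(D,D,D) > 0. -/
/-- Decomposition: if `H` has codimension 1 and `u ∉ H`, every `v` is a multiple of `u`
plus an element of `H`. -/
lemma exists_decomp {V : Type*} [AddCommGroup V] [Module ℝ V]
    (H : Submodule ℝ V) (hH : Module.finrank ℝ (V ⧸ H) = 1)
    (u : V) (hu : u ∉ H) (v : V) : ∃ c : ℝ, v - c • u ∈ H := by
  have hu' : (Submodule.Quotient.mk u : V ⧸ H) ≠ 0 := by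
    simpa [Submodule.Quotient.mk_eq_zero] using hu
  obtain ⟨c, hc⟩ := (finrank_eq_one_iff_of_nonzero' _ hu').mp hH
    (Submodule.Quotient.mk v)
  refine ⟨c, (Submodule.Quotient.mk_eq_zero H).mp ?_⟩
  have : (Submodule.Quotient.mk (v - c • u) : V ⧸ H)
      = Submodule.Quotient.mk v - c • Submodule.Quotient.mk u := by
    simp
  rw [this, ← hc, sub_self]

/-- Key linear algebra lemma: for a symmetric bilinear form whose quadratic form is
Lorentzian, a nonzero vector orthogonal to a positive vector is negative. -/
lemma lorentz_orth_neg {V : Type*} [AddCommGroup V] [Module ℝ V]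
    (B : V →ₗ[ℝ] V →ₗ[ℝ] ℝ) (hB : ∀ x y, B x y = B y x)
    (hQ : IsLorentzian fun x => B x x)
    (u v : V) (hu : B u u > 0) (huv : B u v = 0) (hv : v ≠ 0) : B v v < 0 := by
  obtain ⟨⟨H, hH1, hH2⟩, -⟩ := hQ
  have huH : u ∉ H := by
    intro huH
    have hu0 : u ≠ 0 := by rintro rfl; simp at hu
    exact absurd hu (not_lt.mpr (le_of_lt (hH2 u huH hu0)))
  obtain ⟨c, hch⟩ := exists_decomp H hH1 u huH v
  set h : V := v - c • u with hh
  have hv' : v = c • u + h := by rw [hh]; abel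
  have hBuh : B u h = -(c * B u u) := by
    have : B u v = c * B u u + B u h := by rw [hv']; simp [mul_comm]
    linarith [huv ▸ this]
  have hBvv : B v v = -(c * c * B u u) + B h h := by
    rw [hv']
    simp only [map_add, map_smul, LinearMap.add_apply, LinearMap.smul_apply, smul_eq_mul]
    have h1 : B h u = B u h := hB h u
    rw [h1, hBuh]; ring
  by_cases hh0 : h = 0
  · exfalso
    have hc0 : c ≠ 0 := by
      intro hc0
      apply hv
      rw [hv', hh0, hc0, zero_smul, add_zero]
    have : B u v = c * B u u := by
      rw [hv', hh0]; simp [mul_comm]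
    rw [huv] at this
    exact hc0 (by cases (mul_eq_zero.mp this.symm) with
      | inl h => exact h
      | inr h => exact absurd h (ne_of_gt hu))
  · have := hH2 h hch hh0
    nlinarith [mul_self_nonneg c]

theorem stmt1
    (V : Type*) [NormedAddCommGroup V] [NormedSpace ℝ V] [FiniteDimensional ℝ V]
    (T : V →ₗ[ℝ] V →ₗ[ℝ] V →ₗ[ℝ] ℝ)
    (hT1 : ∀ x y z : V, T x y z = T y x z)
    (hT2 : ∀ x y z : V, T x y z = T x z y)
    (D1 D2 : V)
    (h1 : D1 ∈ posIndexSet T)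
    (h2 : D2 ∈ connectedComponentIn (posIndexSet T) D1)
    (t : ℝ) (ht : t ∈ Set.Icc (0 : ℝ) 1) :
    T (t • D1 + (1 - t) • D2) (t • D1 + (1 - t) • D2) (t • D1 + (1 - t) • D2) > 0 := by
  set S := posIndexSet T with hS
  set C := connectedComponentIn S D1 with hC
  have hCS : C ⊆ S := connectedComponentIn_subset S D1
  have hD2S : D2 ∈ S := hCS h2
  have ha : T D1 D1 D1 > 0 := h1.1
  have hd : T D2 D2 D2 > 0 := hD2S.1
  have hD1ne : D1 ≠ 0 := by rintro rfl; simp at ha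
  -- the function f
  set f : V → ℝ := fun E => min (T D1 D1 E) (T D1 E E) with hf
  -- continuity of f
  have hcont1 : Continuous fun E : V => T D1 D1 E :=
    (T D1 D1).continuous_of_finiteDimensional
  have hcont2 : Continuous fun E : V => T D1 E E := by
    have hg : Continuous fun E : V =>
        (LinearMap.toContinuousLinearMap.toLinearMap.comp (T D1) E : V →L[ℝ] ℝ) :=
      (LinearMap.toContinuousLinearMap.toLinearMap.comp (T D1)).continuous_of_finiteDimensional
    have := hg.clm_apply continuous_id
    simpa using this
  have hfc : Continuous f := hcont1.min hcont2
  -- f does not vanish on C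
  have hne : ∀ E ∈ C, f E ≠ 0 := by
    intro E hEC hfE
    have hES : E ∈ S := hCS hEC
    have hEne : E ≠ 0 := by
      rintro rfl
      rw [hS] at hES
      simp [posIndexSet] at hES
    have hp : (0:ℝ) ≤ T D1 D1 E := (le_min_iff.mp (le_of_eq hfE.symm)).1
    have hq : (0:ℝ) ≤ T D1 E E :=
      (le_min_iff.mp (le_of_eq hfE.symm)).2
    rcases min_eq_iff.mp hfE with ⟨hp0, -⟩ | ⟨hq0, -⟩
    · -- T D1 D1 E = 0 : apply lemma with B = T D1, u = D1, v = E
      have := lorentz_orth_neg (T D1) (fun x y => hT2 D1 x y) h1.2 D1 E ha hp0 hEne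
      linarith
    · -- T D1 E E = 0 : apply lemma with B = T E, u = E, v = D1
      have he : T E E D1 = 0 := by rw [hT2 E E D1, hT1 E D1 E]; exact hq0
      have := lorentz_orth_neg (T E) (fun x y => hT2 E x y) hES.2 E D1 hES.1 he hD1ne
      have heq : T E D1 D1 = T D1 D1 E := by rw [hT1 E D1 D1, hT2 D1 E D1]
      rw [heq] at this
      linarith
  -- connectivity argument: f > 0 on C
  have hD1C : D1 ∈ C := mem_connectedComponentIn h1
  have hpre : IsPreconnected C :=
    (isConnected_connectedComponentIn_iff.mpr h1).isPreconnected
  have hfD1 : f D1 = T D1 D1 D1 := by simp [hf]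
  have hfD2pos : f D2 > 0 := by
    by_contra hle
    push_neg at hle
    have himg : IsPreconnected (f '' C) := hpre.image f hfc.continuousOn
    have h0 : (0 : ℝ) ∈ f '' C := by
      apply himg.ordConnected.out (Set.mem_image_of_mem f h2) (Set.mem_image_of_mem f hD1C)
      constructor
      · exact hle
      · rw [hfD1]; linarith
    obtain ⟨E, hEC, hE0⟩ := h0
    exact hne E hEC hE0
  have hb : T D1 D1 D2 > 0 := lt_of_lt_of_le hfD2pos (min_le_left _ _)
  have hc : T D1 D2 D2 > 0 := lt_of_lt_of_le hfD2pos (min_le_right _ _)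
  -- expansion
  have e1 : T D2 D1 D1 = T D1 D1 D2 := by rw [hT1 D2 D1 D1, hT2 D1 D2 D1]
  have e2 : T D1 D2 D1 = T D1 D1 D2 := by rw [hT2 D1 D2 D1]
  have e3 : T D2 D1 D2 = T D1 D2 D2 := by rw [hT1 D2 D1 D2]
  have e4 : T D2 D2 D1 = T D1 D2 D2 := by rw [hT2 D2 D2 D1, hT1 D2 D1 D2]
  have expand : T (t • D1 + (1 - t) • D2) (t • D1 + (1 - t) • D2) (t • D1 + (1 - t) • D2)
      = t^3 * T D1 D1 D1 + 3*t^2*(1-t) * T D1 D1 D2 + 3*t*(1-t)^2 * T D1 D2 D2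
        + (1-t)^3 * T D2 D2 D2 := by
    simp only [map_add, map_smul, LinearMap.add_apply, LinearMap.smul_apply, smul_eq_mul]
    rw [e1, e2, e3, e4]; ring
  rw [expand]
  obtain ⟨ht0, ht1⟩ := ht
  have n1 : 0 ≤ t^3 * T D1 D1 D1 := mul_nonneg (pow_nonneg ht0 3) ha.le
  have n2 : 0 ≤ 3*t^2*(1-t) * T D1 D1 D2 :=
    mul_nonneg (mul_nonneg (by positivity) (by linarith)) hb.le
  have n3 : 0 ≤ 3*t*(1-t)^2 * T D1 D2 D2 :=
    mul_nonneg (mul_nonneg (by positivity) (by positivity)) hc.le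
  have n4 : 0 ≤ (1-t)^3 * T D2 D2 D2 := mul_nonneg (pow_nonneg (by linarith) 3) hd.le
  rcases le_total t (1/2) with hhalf | hhalf
  · have hcube : ((1:ℝ)/2)^3 ≤ (1-t)^3 := by
      apply pow_le_pow_left₀ (by norm_num) (by linarith)
    have hkey : ((1:ℝ)/2)^3 * T D2 D2 D2 ≤ (1-t)^3 * T D2 D2 D2 :=
      mul_le_mul_of_nonneg_right hcube hd.le
    nlinarith
  · have hcube : ((1:ℝ)/2)^3 ≤ t^3 := by
      apply pow_le_pow_left₀ (by norm_num) (by linarith)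
    have hkey : ((1:ℝ)/2)^3 * T D1 D1 D1 ≤ t^3 * T D1 D1 D1 :=
      mul_le_mul_of_nonneg_right hcube ha.le
    nlinarith
end

section
/- Let E ∈ V be such that the quadratic form Q_E is negative semidefinite on some linear subspace of V of codimension 1. If D1 and D2 lie in the same connected component of the set {D ∈ S(T) : T(D,D,E) > 0}, then T(D1, D2, E) > 0. -/
lemma key_aux {V : Type*} [AddCommGroup V] [Module ℝ V] [FiniteDimensional ℝ V]
    (B : V →ₗ[ℝ] V →ₗ[ℝ] ℝ) (hB : ∀ x y, B x y = B y x)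
    (H : Submodule ℝ V) (hH : Module.finrank ℝ (V ⧸ H) = 1)
    (hneg : ∀ v ∈ H, B v v ≤ 0)
    (u w : V) (hu : B u u > 0) (hw : B w w > 0) (h0 : B u w = 0) : False := by
  have hli : LinearIndependent ℝ ![u, w] := by
    rw [LinearIndependent.pair_iff]
    intro s t hst
    have h1 : B u (s • u + t • w) = 0 := by rw [hst]; simp
    have h2 : B w (s • u + t • w) = 0 := by rw [hst]; simp
    simp only [map_add, map_smul, smul_eq_mul, h0] at h1 h2
    rw [hB w u, h0] at h2
    constructor
    · nlinarith
    · nlinarith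
  have hset : ({u, w} : Set V) = Set.range ![u, w] := by
    simp [Matrix.range_cons, Matrix.range_empty, Set.pair_comm]
  set W := Submodule.span ℝ ({u, w} : Set V) with hW
  have hWrank : Module.finrank ℝ W = 2 := by
    rw [hW, hset, finrank_span_eq_card hli]; simp
  have hHrank := Submodule.finrank_quotient_add_finrank H
  have hsupinf := Submodule.finrank_sup_add_finrank_inf_eq W H
  have hsup : Module.finrank ℝ ↥(W ⊔ H) ≤ Module.finrank ℝ V := Submodule.finrank_le _
  have hinf : 0 < Module.finrank ℝ ↥(W ⊓ H) := by omega
  obtain ⟨v, hv⟩ := Module.finrank_pos_iff_exists_ne_zero.mp hinf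
  have hvW : (v : V) ∈ W := v.2.1
  have hvH : (v : V) ∈ H := v.2.2
  have hvne : (v : V) ≠ 0 := fun h => hv (Subtype.ext h)
  obtain ⟨a, b, hab⟩ := Submodule.mem_span_pair.mp hvW
  have hQ : B (v : V) (v : V) = a * a * B u u + b * b * B w w := by
    rw [← hab]
    simp only [map_add, map_smul, LinearMap.add_apply, LinearMap.smul_apply, smul_eq_mul, h0]
    rw [hB w u]
    ring_nf
    rw [h0]
    ring
  have hQle := hneg _ hvH
  have : a = 0 ∧ b = 0 := by
    constructor
    · by_contra hne
      nlinarith [mul_pos (mul_self_pos.mpr hne) hu, mul_nonneg (mul_self_nonneg b) hw.le]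
    · by_contra hne
      nlinarith [mul_pos (mul_self_pos.mpr hne) hw, mul_nonneg (mul_self_nonneg a) hu.le]
  apply hvne
  rw [← hab, this.1, this.2]; simp

theorem stmt2
    (V : Type*) [NormedAddCommGroup V] [NormedSpace ℝ V] [FiniteDimensional ℝ V]
    (T : V →ₗ[ℝ] V →ₗ[ℝ] V →ₗ[ℝ] ℝ)
    (hT1 : ∀ x y z : V, T x y z = T y x z)
    (hT2 : ∀ x y z : V, T x y z = T x z y)
    (E : V)
    (hE : ∃ H : Submodule ℝ V, Module.finrank ℝ (V ⧸ H) = 1 ∧ ∀ v ∈ H, T E v v ≤ 0)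
    (D1 D2 : V)
    (h1 : D1 ∈ {D ∈ posIndexSet T | T D D E > 0})
    (h2 : D2 ∈ connectedComponentIn {D ∈ posIndexSet T | T D D E > 0} D1) :
    T D1 D2 E > 0 := by
  obtain ⟨H, hH1, hH2⟩ := hE
  have hBsym : ∀ x y : V, T E x y = T E y x := fun x y => hT2 E x y
  have hswap : ∀ x y : V, T E x y = T x y E := fun x y => by
    rw [hT1 E x y, hT2 x E y]
  set S := {D ∈ posIndexSet T | T D D E > 0} with hS
  have hkey : ∀ D ∈ S, T E D1 D ≠ 0 := by
    intro D hD h0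
    have hD1E : T E D1 D1 > 0 := by rw [hswap D1 D1]; exact h1.2
    have hDE : T E D D > 0 := by rw [hswap D D]; exact hD.2
    exact key_aux (T E) hBsym H hH1 hH2 D1 D hD1E hDE h0
  have hconn : IsPreconnected (connectedComponentIn S D1) :=
    (isConnected_connectedComponentIn_iff.mpr h1).isPreconnected
  have hcont : ContinuousOn (fun D => T E D1 D) (connectedComponentIn S D1) :=
    (LinearMap.continuous_of_finiteDimensional (T E D1)).continuousOn
  have hmem1 : D1 ∈ connectedComponentIn S D1 := mem_connectedComponentIn h1
  by_contra hle
  push_neg at hle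
  have h0mem : (0 : ℝ) ∈ Set.Icc (T E D1 D2) (T E D1 D1) := by
    constructor
    · rw [hswap D1 D2]; exact hle
    · rw [hswap D1 D1]; exact h1.2.le
  obtain ⟨x, hxC, hx0⟩ := hconn.intermediate_value h2 hmem1 hcont h0mem
  exact hkey x (connectedComponentIn_subset S D1 hxC) hx0
end

section
/- Let E_1, …, E_r ∈ V be such that for each i the quadratic form Q_{E_i} is negative semidefinite on some linear subspace of V of codimension 1. If D1 and D2 lie in the same connected component of the set {D ∈ S(T) : T(D,D,E_i) > 0 for all i = 1,…,r}, then T(D1, D2, E_i) > 0 for every i = 1,…,r. -/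
/-- Reverse Cauchy–Schwarz style lemma: if a symmetric bilinear form is negative
semidefinite on a codimension-1 subspace and `B x x > 0`, `B y y > 0`, then
`B x y ≠ 0`. -/
lemma key_ne_zero {V : Type*} [AddCommGroup V] [Module ℝ V]
    (B : V →ₗ[ℝ] V →ₗ[ℝ] ℝ) (hsymm : ∀ x y, B x y = B y x)
    (H : Submodule ℝ V) (hH : Module.finrank ℝ (V ⧸ H) = 1)
    (hneg : ∀ v ∈ H, B v v ≤ 0)
    (x y : V) (hx : B x x > 0) (hy : B y y > 0) : B x y ≠ 0 := by
  intro hxy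
  obtain ⟨v0, hv0, hspan⟩ := finrank_eq_one_iff'.mp hH
  obtain ⟨a, ha⟩ := hspan (H.mkQ x)
  obtain ⟨b, hb⟩ := hspan (H.mkQ y)
  by_cases haz : a = 0
  · -- then x ∈ H, contradicting B x x > 0
    have hxH : x ∈ H := by
      have : H.mkQ x = 0 := by rw [← ha, haz, zero_smul]
      simpa [Submodule.Quotient.mk_eq_zero] using this
    exact absurd (hneg x hxH) (not_le.mpr hx)
  · set w := b • x - a • y with hw
    have hwH : w ∈ H := by
      have : H.mkQ w = 0 := by
        simp only [hw, map_sub, map_smul, ← ha, ← hb, smul_smul]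
        rw [mul_comm]
        ring_nf
        simp [sub_self]
      simpa [Submodule.Quotient.mk_eq_zero] using this
    have hBw : B w w = b ^ 2 * B x x + a ^ 2 * B y y := by
      simp only [hw, map_sub, map_smul, LinearMap.sub_apply, LinearMap.smul_apply,
        smul_eq_mul]
      rw [hsymm y x, hxy]
      ring
    have hpos : 0 < B w w := by
      rw [hBw]
      have h1 : 0 ≤ b ^ 2 * B x x := mul_nonneg (sq_nonneg b) hx.le
      have h2 : 0 < a ^ 2 * B y y := mul_pos (by positivity) hy
      linarith
    exact absurd (hneg w hwH) (not_le.mpr hpos)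

theorem stmt3
    (V : Type*) [NormedAddCommGroup V] [NormedSpace ℝ V] [FiniteDimensional ℝ V]
    (T : V →ₗ[ℝ] V →ₗ[ℝ] V →ₗ[ℝ] ℝ)
    (hT1 : ∀ x y z : V, T x y z = T y x z)
    (hT2 : ∀ x y z : V, T x y z = T x z y)
    (r : ℕ) (E : Fin r → V)
    (hE : ∀ i, ∃ H : Submodule ℝ V, Module.finrank ℝ (V ⧸ H) = 1 ∧
      ∀ v ∈ H, T (E i) v v ≤ 0)
    (D1 D2 : V)
    (h1 : D1 ∈ {D ∈ posIndexSet T | ∀ i, T D D (E i) > 0})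
    (h2 : D2 ∈ connectedComponentIn {D ∈ posIndexSet T | ∀ i, T D D (E i) > 0} D1) :
    ∀ i, T D1 D2 (E i) > 0 := by
  intro i
  obtain ⟨H, hH, hneg⟩ := hE i
  set S : Set V := {D ∈ posIndexSet T | ∀ i, T D D (E i) > 0} with hS
  -- the bilinear form B := T (E i), symmetric
  have hBsymm : ∀ x y : V, T (E i) x y = T (E i) y x := fun x y => hT2 (E i) x y
  have hflip : ∀ D D' : V, T D D' (E i) = T (E i) D D' := by
    intro D D'
    rw [hT2 D D' (E i), hT1 D (E i) D']
  -- every D in S satisfies T (E i) D D > 0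
  have hSpos : ∀ D ∈ S, 0 < T (E i) D D := by
    intro D hD
    have := hD.2 i
    rwa [hflip] at this
  have hD1pos : 0 < T (E i) D1 D1 := hSpos D1 h1
  -- g is continuous linear functional
  set g : V →ₗ[ℝ] ℝ := T (E i) D1 with hg
  have hgc : Continuous g := g.continuous_of_finiteDimensional
  have hne : ∀ D ∈ S, g D ≠ 0 := by
    intro D hD
    exact key_ne_zero (T (E i)) hBsymm H hH hneg D1 D hD1pos (hSpos D hD)
  set U : Set V := g ⁻¹' Set.Ioi 0 with hU
  set U' : Set V := g ⁻¹' Set.Iio 0 with hU'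
  have hUo : IsOpen U := isOpen_Ioi.preimage hgc
  have hU'o : IsOpen U' := isOpen_Iio.preimage hgc
  set C := connectedComponentIn S D1 with hC
  have hCpre : IsPreconnected C := (isConnected_connectedComponentIn_iff.mpr h1).isPreconnected
  have hCS : C ⊆ S := connectedComponentIn_subset S D1
  have hcover : C ⊆ U ∪ U' := by
    intro D hD
    rcases lt_or_gt_of_ne (hne D (hCS hD)) with h | h
    · exact Or.inr h
    · exact Or.inl h
  have hD1C : D1 ∈ C := mem_connectedComponentIn h1
  have hD2 : D2 ∈ U := by
    by_contra hcontra
    have hD2U' : D2 ∈ U' := by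
      rcases hcover h2 with h | h
      · exact absurd h hcontra
      · exact h
    obtain ⟨z, hzC, hzU, hzU'⟩ := hCpre U U' hUo hU'o hcover ⟨D1, hD1C, hD1pos⟩ ⟨D2, h2, hD2U'⟩
    simp only [hU, hU', Set.mem_preimage, Set.mem_Ioi, Set.mem_Iio] at hzU hzU'
    linarith
  have : 0 < T (E i) D1 D2 := hD2
  rwa [hflip]
end

section
/- Let f(x,y) = x·y·(x+y) on ℝ², and for D = (a,b) ∈ ℝ² let Q_D be the quadratic form Q_D(x,y) = (1/3)·(a·(2xy + y²) + b·(x² + 2xy)) (the polarization of f in direction D). Then: (i) for every (a,b) ≠ (0,0), the form Q_D is Lorentzian; and (ii) the set {(x,y) ∈ ℝ² : x·y·(x+y) > 0} has exactly three connected components. -/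
/-- A quadratic form (given as a function) on `ℝ²` is *Lorentzian* if it is negative
definite on some 1-dimensional linear subspace and takes a positive value somewhere. -/
def IsLorentzian2 (Q : ℝ × ℝ → ℝ) : Prop :=
  (∃ H : Submodule ℝ (ℝ × ℝ), Module.finrank ℝ H = 1 ∧ ∀ v ∈ H, v ≠ 0 → Q v < 0) ∧
  (∃ v : ℝ × ℝ, Q v > 0)

private lemma lorentzian_of (a b : ℝ) (v : ℝ × ℝ) (hv : v ≠ 0)
    (hneg : (1/3) * (a * (2 * v.1 * v.2 + v.2 ^ 2) + b * (v.1 ^ 2 + 2 * v.1 * v.2)) < 0)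
    (w : ℝ × ℝ)
    (hpos : 0 < (1/3) * (a * (2 * w.1 * w.2 + w.2 ^ 2) + b * (w.1 ^ 2 + 2 * w.1 * w.2))) :
    IsLorentzian2 (fun v : ℝ × ℝ =>
      (1 / 3) * (a * (2 * v.1 * v.2 + v.2 ^ 2) + b * (v.1 ^ 2 + 2 * v.1 * v.2))) := by
  constructor
  · refine ⟨Submodule.span ℝ {v}, finrank_span_singleton hv, ?_⟩
    intro u hu hu0
    rw [Submodule.mem_span_singleton] at hu
    obtain ⟨t, rfl⟩ := hu
    have ht : t ≠ 0 := by rintro rfl; simp at hu0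
    have h1 : (t • v).1 = t * v.1 := rfl
    have h2 : (t • v).2 = t * v.2 := rfl
    simp only [h1, h2]
    have heq : (1/3 : ℝ) * (a * (2 * (t * v.1) * (t * v.2) + (t * v.2) ^ 2)
        + b * ((t * v.1) ^ 2 + 2 * (t * v.1) * (t * v.2)))
        = t ^ 2 * ((1/3) * (a * (2 * v.1 * v.2 + v.2 ^ 2) + b * (v.1 ^ 2 + 2 * v.1 * v.2))) := by
      ring
    have ht2 : 0 < t ^ 2 := by positivity
    calc (1/3 : ℝ) * (a * (2 * (t * v.1) * (t * v.2) + (t * v.2) ^ 2)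
        + b * ((t * v.1) ^ 2 + 2 * (t * v.1) * (t * v.2)))
        = t ^ 2 * ((1/3) * (a * (2 * v.1 * v.2 + v.2 ^ 2) + b * (v.1 ^ 2 + 2 * v.1 * v.2))) := heq
      _ < 0 := mul_neg_of_pos_of_neg ht2 hneg
  · exact ⟨w, hpos⟩

private def Cone1 : Set (ℝ × ℝ) := {v | 0 < v.1 ∧ 0 < v.2}
private def Cone2 : Set (ℝ × ℝ) := {v | 0 < v.1 ∧ v.1 + v.2 < 0}
private def Cone3 : Set (ℝ × ℝ) := {v | 0 < v.2 ∧ v.1 + v.2 < 0}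

private lemma open1 : IsOpen Cone1 :=
  (isOpen_lt continuous_const continuous_fst).inter (isOpen_lt continuous_const continuous_snd)
private lemma open2 : IsOpen Cone2 :=
  (isOpen_lt continuous_const continuous_fst).inter
    (isOpen_lt (continuous_fst.add continuous_snd) continuous_const)
private lemma open3 : IsOpen Cone3 :=
  (isOpen_lt continuous_const continuous_snd).inter
    (isOpen_lt (continuous_fst.add continuous_snd) continuous_const)

private lemma conv1 : Convex ℝ Cone1 := by
  intro x hx y hy s t hs ht hst
  obtain ⟨hx1, hx2⟩ := hx; obtain ⟨hy1, hy2⟩ := hy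
  constructor
  · show 0 < s * x.1 + t * y.1
    rcases eq_or_lt_of_le hs with rfl | hs'
    · simp at hst; subst hst; simpa using hy1
    · nlinarith
  · show 0 < s * x.2 + t * y.2
    rcases eq_or_lt_of_le hs with rfl | hs'
    · simp at hst; subst hst; simpa using hy2
    · nlinarith

private lemma conv2 : Convex ℝ Cone2 := by
  intro x hx y hy s t hs ht hst
  obtain ⟨hx1, hx2⟩ := hx; obtain ⟨hy1, hy2⟩ := hy
  constructor
  · show 0 < s * x.1 + t * y.1
    rcases eq_or_lt_of_le hs with rfl | hs'
    · simp at hst; subst hst; simpa using hy1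
    · nlinarith
  · show (s * x.1 + t * y.1) + (s * x.2 + t * y.2) < 0
    rcases eq_or_lt_of_le hs with rfl | hs'
    · simp at hst; subst hst; simpa using hy2
    · nlinarith

private lemma conv3 : Convex ℝ Cone3 := by
  intro x hx y hy s t hs ht hst
  obtain ⟨hx1, hx2⟩ := hx; obtain ⟨hy1, hy2⟩ := hy
  constructor
  · show 0 < s * x.2 + t * y.2
    rcases eq_or_lt_of_le hs with rfl | hs'
    · simp at hst; subst hst; simpa using hy1
    · nlinarith
  · show (s * x.1 + t * y.1) + (s * x.2 + t * y.2) < 0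
    rcases eq_or_lt_of_le hs with rfl | hs'
    · simp at hst; subst hst; simpa using hy2
    · nlinarith

private def Spos : Set (ℝ × ℝ) := {v | v.1 * v.2 * (v.1 + v.2) > 0}

private lemma hS : Spos = Cone1 ∪ Cone2 ∪ Cone3 := by
  ext ⟨x, y⟩
  simp only [Spos, Cone1, Cone2, Cone3, Set.mem_setOf_eq, Set.mem_union]
  constructor
  · intro h
    rcases lt_trichotomy x 0 with hx | hx | hx
    · rcases lt_trichotomy y 0 with hy | hy | hy
      · exfalso; nlinarith [mul_pos (neg_pos.2 hx) (neg_pos.2 hy)]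
      · subst hy; simp at h
      · refine Or.inr ⟨hy, ?_⟩
        by_contra hc
        push_neg at hc
        nlinarith [mul_neg_of_neg_of_pos hx hy]
    · subst hx; simp at h
    · rcases lt_trichotomy y 0 with hy | hy | hy
      · refine Or.inl (Or.inr ⟨hx, ?_⟩)
        by_contra hc
        push_neg at hc
        nlinarith [mul_neg_of_pos_of_neg hx hy]
      · subst hy; simp at h
      · exact Or.inl (Or.inl ⟨hx, hy⟩)
  · rintro ((⟨h1, h2⟩ | ⟨h1, h2⟩) | ⟨h1, h2⟩)
    · exact mul_pos (mul_pos h1 h2) (by linarith)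
    · exact mul_pos_of_neg_of_neg (mul_neg_of_pos_of_neg h1 (by linarith)) h2
    · exact mul_pos_of_neg_of_neg (mul_neg_of_neg_of_pos (by linarith) h1) h2

private lemma comp_eq (S U V : Set (ℝ × ℝ)) (hSUV : S = U ∪ V) (hU : IsOpen U)
    (hV : IsOpen V) (hdisj : Disjoint U V) (hUconn : IsPreconnected U) (x : ℝ × ℝ)
    (hx : x ∈ U) : connectedComponentIn S x = U := by
  have hxS : x ∈ S := hSUV ▸ Or.inl hx
  apply Set.Subset.antisymm
  · by_contra h
    obtain ⟨y, hy, hyU⟩ := Set.not_subset.mp h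
    have hyS : y ∈ S := connectedComponentIn_subset S x hy
    have hyV : y ∈ V := (hSUV ▸ hyS).resolve_left hyU
    have hpre := isPreconnected_connectedComponentIn (F := S) (x := x)
    have hcover : connectedComponentIn S x ⊆ U ∪ V := fun z hz =>
      hSUV ▸ connectedComponentIn_subset S x hz
    have hne1 : (connectedComponentIn S x ∩ U).Nonempty :=
      ⟨x, mem_connectedComponentIn hxS, hx⟩
    have hne2 : (connectedComponentIn S x ∩ V).Nonempty := ⟨y, hy, hyV⟩
    obtain ⟨z, _, hzU, hzV⟩ := hpre U V hU hV hcover hne1 hne2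
    exact (hdisj.ne_of_mem hzU hzV) rfl
  · exact hUconn.subset_connectedComponentIn hx (hSUV ▸ Set.subset_union_left)

theorem stmt10 :
    (∀ a b : ℝ, (a, b) ≠ ((0 : ℝ), (0 : ℝ)) →
      IsLorentzian2 (fun v : ℝ × ℝ =>
        (1 / 3) * (a * (2 * v.1 * v.2 + v.2 ^ 2) + b * (v.1 ^ 2 + 2 * v.1 * v.2)))) ∧
    {C : Set (ℝ × ℝ) | ∃ x ∈ {v : ℝ × ℝ | v.1 * v.2 * (v.1 + v.2) > 0},
      C = connectedComponentIn {v : ℝ × ℝ | v.1 * v.2 * (v.1 + v.2) > 0} x}.ncard = 3 := by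
  constructor
  · intro a b hab
    have hab' : a ≠ 0 ∨ b ≠ 0 := by
      by_contra h
      push_neg at h
      exact hab (by simp [h.1, h.2])
    rcases lt_trichotomy a 0 with ha | ha | ha
    · -- a < 0 : negative at (0,1). positive at (1,0) if b>0, else at (1,-1)
      rcases lt_trichotomy b 0 with hb | hb | hb
      · exact lorentzian_of a b (0, 1) (by simp) (by norm_num; linarith) (1, -1)
          (by norm_num; linarith)
      · exact lorentzian_of a b (0, 1) (by simp) (by norm_num; linarith) (1, -1)
          (by norm_num; linarith)
      · exact lorentzian_of a b (0, 1) (by simp) (by norm_num; linarith) (1, 0)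
          (by norm_num; linarith)
    · -- a = 0, b ≠ 0
      subst ha
      rcases hab'.resolve_left (by simp) |>.lt_or_gt with hb | hb
      · exact lorentzian_of 0 b (1, 0) (by simp) (by norm_num; linarith) (1, -1)
          (by norm_num; linarith)
      · exact lorentzian_of 0 b (1, -1) (by norm_num [Prod.ext_iff]) (by norm_num; linarith)
          (1, 0) (by norm_num; linarith)
    · -- a > 0 : positive at (0,1)
      rcases lt_trichotomy b 0 with hb | hb | hb
      · exact lorentzian_of a b (1, 0) (by simp [Prod.ext_iff]) (by norm_num; linarith) (0, 1)
          (by norm_num; linarith)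
      · exact lorentzian_of a b (1, -1) (by norm_num [Prod.ext_iff]) (by norm_num; linarith)
          (0, 1) (by norm_num; linarith)
      · exact lorentzian_of a b (1, -1) (by norm_num [Prod.ext_iff]) (by norm_num; linarith)
          (0, 1) (by norm_num; linarith)
  · -- three connected components
    have h1 : Spos = Cone1 ∪ (Cone2 ∪ Cone3) := by rw [hS, Set.union_assoc]
    have h2 : Spos = Cone2 ∪ (Cone1 ∪ Cone3) := by
      rw [hS]; ext v; simp only [Set.mem_union]; tauto
    have h3 : Spos = Cone3 ∪ (Cone1 ∪ Cone2) := by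
      rw [hS]; ext v; simp only [Set.mem_union]; tauto
    have d12 : Disjoint Cone1 Cone2 := by
      rw [Set.disjoint_left]; rintro v ⟨a1, a2⟩ ⟨b1, b2⟩; linarith
    have d13 : Disjoint Cone1 Cone3 := by
      rw [Set.disjoint_left]; rintro v ⟨a1, a2⟩ ⟨b1, b2⟩; linarith
    have d23 : Disjoint Cone2 Cone3 := by
      rw [Set.disjoint_left]; rintro v ⟨a1, a2⟩ ⟨b1, b2⟩; linarith
    have comp1 : ∀ x ∈ Cone1, connectedComponentIn Spos x = Cone1 := fun x hx =>
      comp_eq Spos Cone1 (Cone2 ∪ Cone3) h1 open1 (open2.union open3)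
        (Set.disjoint_union_right.mpr ⟨d12, d13⟩) conv1.isPreconnected x hx
    have comp2 : ∀ x ∈ Cone2, connectedComponentIn Spos x = Cone2 := fun x hx =>
      comp_eq Spos Cone2 (Cone1 ∪ Cone3) h2 open2 (open1.union open3)
        (Set.disjoint_union_right.mpr ⟨d12.symm, d23⟩) conv2.isPreconnected x hx
    have comp3 : ∀ x ∈ Cone3, connectedComponentIn Spos x = Cone3 := fun x hx =>
      comp_eq Spos Cone3 (Cone1 ∪ Cone2) h3 open3 (open1.union open2)
        (Set.disjoint_union_right.mpr ⟨d13.symm, d23.symm⟩) conv3.isPreconnected x hx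
    have m1 : ((1 : ℝ), (1 : ℝ)) ∈ Cone1 := by constructor <;> norm_num
    have m2 : ((1 : ℝ), (-2 : ℝ)) ∈ Cone2 := by constructor <;> norm_num
    have m3 : ((-2 : ℝ), (1 : ℝ)) ∈ Cone3 := by constructor <;> norm_num
    have hset : {C : Set (ℝ × ℝ) | ∃ x ∈ Spos, C = connectedComponentIn Spos x}
        = {Cone1, Cone2, Cone3} := by
      ext C
      simp only [Set.mem_setOf_eq, Set.mem_insert_iff, Set.mem_singleton_iff]
      constructor
      · rintro ⟨x, hx, rfl⟩
        rcases (hS ▸ hx : x ∈ Cone1 ∪ Cone2 ∪ Cone3) with (h | h) | h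
        · exact Or.inl (comp1 x h)
        · exact Or.inr (Or.inl (comp2 x h))
        · exact Or.inr (Or.inr (comp3 x h))
      · rintro (rfl | rfl | rfl)
        · exact ⟨(1, 1), hS ▸ Or.inl (Or.inl m1), (comp1 _ m1).symm⟩
        · exact ⟨(1, -2), hS ▸ Or.inl (Or.inr m2), (comp2 _ m2).symm⟩
        · exact ⟨(-2, 1), hS ▸ Or.inr m3, (comp3 _ m3).symm⟩
    have ne12 : Cone1 ≠ Cone2 := by
      intro h
      have : ((1 : ℝ), (1 : ℝ)) ∈ Cone2 := h ▸ m1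
      obtain ⟨_, h2⟩ := this; norm_num at h2
    have ne13 : Cone1 ≠ Cone3 := by
      intro h
      have : ((1 : ℝ), (1 : ℝ)) ∈ Cone3 := h ▸ m1
      obtain ⟨_, h2⟩ := this; norm_num at h2
    have ne23 : Cone2 ≠ Cone3 := by
      intro h
      have : ((1 : ℝ), (-2 : ℝ)) ∈ Cone3 := h ▸ m2
      obtain ⟨h1, _⟩ := this; norm_num at h1
    show {C : Set (ℝ × ℝ) | ∃ x ∈ Spos, C = connectedComponentIn Spos x}.ncard = 3
    rw [hset]
    exact Set.ncard_eq_three.mpr ⟨Cone1, Cone2, Cone3, ne12, ne13, ne23, rfl⟩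
end

section
/- Let f(x,y) = y·(x² + y²) on ℝ², and for D = (a,b) ∈ ℝ² let Q_D be the quadratic form Q_D(x,y) = (1/3)·(2a·xy + b·(x² + 3y²)) (the polarization of f in direction D). Then the set {(a,b) ∈ ℝ² : f(a,b) > 0 and Q_{(a,b)} is Lorentzian} is exactly {(a,b) ∈ ℝ² : b > 0 and a² > 3b²}, and this set has exactly two connected components. -/
noncomputable abbrev myS : Set (ℝ × ℝ) := {D : ℝ × ℝ | D.2 > 0 ∧ D.1 ^ 2 > 3 * D.2 ^ 2}
noncomputable def mySp : Set (ℝ × ℝ) := {p | Real.sqrt 3 * p.2 < p.1 ∧ 0 < p.2}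
noncomputable def mySm : Set (ℝ × ℝ) := {p | p.1 < -(Real.sqrt 3 * p.2) ∧ 0 < p.2}

lemma s3_sq : Real.sqrt 3 ^ 2 = 3 := Real.sq_sqrt (by norm_num)
lemma s3_pos : 0 < Real.sqrt 3 := Real.sqrt_pos.mpr (by norm_num)

lemma S_eq : myS = mySp ∪ mySm := by
  ext ⟨a, b⟩
  simp only [myS, mySp, mySm, Set.mem_setOf_eq, Set.mem_union]
  constructor
  · rintro ⟨hb, ha⟩
    have h3 : (Real.sqrt 3 * b) ^ 2 < a ^ 2 := by nlinarith [s3_sq]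
    rcases lt_or_ge a 0 with h | h
    · right; refine ⟨?_, hb⟩; nlinarith [s3_pos, mul_pos s3_pos hb]
    · left; refine ⟨?_, hb⟩; nlinarith [mul_pos s3_pos hb]
  · rintro (⟨h1, hb⟩ | ⟨h1, hb⟩) <;> refine ⟨hb, ?_⟩ <;>
      nlinarith [s3_sq, mul_pos s3_pos hb]

lemma convex_Sp : Convex ℝ mySp := by
  have h : mySp = {p : ℝ × ℝ | Real.sqrt 3 * p.2 - p.1 < 0} ∩ {p : ℝ × ℝ | -p.2 < 0} := by
    ext p
    simp only [mySp, Set.mem_setOf_eq, Set.mem_inter_iff]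
    constructor <;> intro hh <;> exact ⟨by linarith [hh.1], by linarith [hh.2]⟩
  rw [h]
  exact (convex_halfSpace_lt ⟨fun x y => by simp; ring, fun c x => by simp; ring⟩ 0).inter
    (convex_halfSpace_lt ⟨fun x y => by simp; ring, fun c x => by simp⟩ 0)

lemma convex_Sm : Convex ℝ mySm := by
  have h : mySm = {p : ℝ × ℝ | p.1 + Real.sqrt 3 * p.2 < 0} ∩ {p : ℝ × ℝ | -p.2 < 0} := by
    ext p
    simp only [mySm, Set.mem_setOf_eq, Set.mem_inter_iff]
    constructor <;> intro hh <;> exact ⟨by linarith [hh.1], by linarith [hh.2]⟩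
  rw [h]
  exact (convex_halfSpace_lt ⟨fun x y => by simp; ring, fun c x => by simp; ring⟩ 0).inter
    (convex_halfSpace_lt ⟨fun x y => by simp; ring, fun c x => by simp⟩ 0)

lemma open_Sp : IsOpen mySp := by
  have h : mySp = {p : ℝ × ℝ | Real.sqrt 3 * p.2 < p.1} ∩ {p : ℝ × ℝ | 0 < p.2} := rfl
  rw [h]
  exact (isOpen_lt (by fun_prop) (by fun_prop)).inter (isOpen_lt (by fun_prop) (by fun_prop))

lemma open_Sm : IsOpen mySm := by
  have h : mySm = {p : ℝ × ℝ | p.1 < -(Real.sqrt 3 * p.2)} ∩ {p : ℝ × ℝ | 0 < p.2} := rfl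
  rw [h]
  exact (isOpen_lt (by fun_prop) (by fun_prop)).inter (isOpen_lt (by fun_prop) (by fun_prop))

lemma disj_pm : Disjoint mySp mySm := by
  rw [Set.disjoint_left]
  rintro ⟨a, b⟩ ⟨h1, h2⟩ ⟨h3, _⟩
  nlinarith [mul_pos s3_pos h2]

lemma comp_p {x : ℝ × ℝ} (hx : x ∈ mySp) : connectedComponentIn myS x = mySp := by
  have hxS : x ∈ myS := S_eq ▸ Or.inl hx
  apply subset_antisymm
  · exact isPreconnected_connectedComponentIn.subset_left_of_subset_union open_Sp open_Sm disj_pm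
      (S_eq ▸ connectedComponentIn_subset myS x)
      ⟨x, mem_connectedComponentIn hxS, hx⟩
  · exact convex_Sp.isPreconnected.subset_connectedComponentIn hx
      (S_eq ▸ Set.subset_union_left)

lemma comp_m {x : ℝ × ℝ} (hx : x ∈ mySm) : connectedComponentIn myS x = mySm := by
  have hxS : x ∈ myS := S_eq ▸ Or.inr hx
  apply subset_antisymm
  · exact isPreconnected_connectedComponentIn.subset_right_of_subset_union open_Sp open_Sm disj_pm
      (S_eq ▸ connectedComponentIn_subset myS x)
      ⟨x, mem_connectedComponentIn hxS, hx⟩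
  · exact convex_Sm.isPreconnected.subset_connectedComponentIn hx
      (S_eq ▸ Set.subset_union_right)

lemma mem_Sp : ((2 : ℝ), (1 : ℝ)) ∈ mySp := by
  constructor
  · simpa using Real.sqrt_lt_sqrt (by norm_num) (by norm_num : (3:ℝ) < 4) |>.trans_eq
      (by rw [show (4:ℝ) = 2^2 by norm_num, Real.sqrt_sq (by norm_num)])
  · norm_num

lemma mem_Sm : ((-2 : ℝ), (1 : ℝ)) ∈ mySm := by
  constructor
  · have := mem_Sp.1; simp at this ⊢; linarith
  · norm_num

theorem stmt12 :
    {D : ℝ × ℝ | D.2 * (D.1 ^ 2 + D.2 ^ 2) > 0 ∧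
      IsLorentzian2 (fun v : ℝ × ℝ =>
        (1 / 3) * (2 * D.1 * v.1 * v.2 + D.2 * (v.1 ^ 2 + 3 * v.2 ^ 2)))}
      = {D : ℝ × ℝ | D.2 > 0 ∧ D.1 ^ 2 > 3 * D.2 ^ 2} ∧
    {C : Set (ℝ × ℝ) | ∃ x ∈ {D : ℝ × ℝ | D.2 > 0 ∧ D.1 ^ 2 > 3 * D.2 ^ 2},
      C = connectedComponentIn {D : ℝ × ℝ | D.2 > 0 ∧ D.1 ^ 2 > 3 * D.2 ^ 2} x}.ncard = 2 := by
  constructor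
  · ext ⟨a, b⟩
    simp only [Set.mem_setOf_eq]
    constructor
    · rintro ⟨hf, ⟨H, hH1, hHneg⟩, v, hv⟩
      have hb : 0 < b := by
        by_contra hb
        push_neg at hb
        nlinarith [sq_nonneg a, sq_nonneg b]
      refine ⟨hb, ?_⟩
      have hHbot : H ≠ ⊥ := by
        intro h
        rw [h] at hH1
        simp at hH1
      obtain ⟨w, hwH, hw0⟩ := Submodule.exists_mem_ne_zero_of_ne_bot hHbot
      have hQw := hHneg w hwH hw0
      simp only at hQw
      by_contra h'
      push_neg at h'
      have hw2 : w.2 ≠ 0 ∨ w.1 ≠ 0 := by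
        by_contra h
        push_neg at h
        exact hw0 (Prod.ext h.2 h.1)
      rcases hw2 with h2 | h1
      · nlinarith [sq_nonneg (b * w.1 + a * w.2), sq_pos_of_ne_zero h2]
      · nlinarith [sq_nonneg (b * w.1 + a * w.2), sq_pos_of_ne_zero h1, sq_nonneg w.2]
    · rintro ⟨hb, ha⟩
      refine ⟨by nlinarith, ⟨Submodule.span ℝ {((-a, b) : ℝ × ℝ)}, ?_, ?_⟩, (0, 1), by
        simp; linarith⟩
      · exact finrank_span_singleton (by
          intro h
          rw [Prod.ext_iff] at h
          exact hb.ne' h.2)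
      · intro v hvH hv0
        rw [Submodule.mem_span_singleton] at hvH
        obtain ⟨t, rfl⟩ := hvH
        have ht : t ≠ 0 := by rintro rfl; simp at hv0
        simp only [Prod.smul_fst, Prod.smul_snd, smul_eq_mul]
        nlinarith [sq_pos_of_ne_zero ht, mul_pos (sq_pos_of_ne_zero ht) hb]
  · have : {C : Set (ℝ × ℝ) | ∃ x ∈ myS, C = connectedComponentIn myS x} = {mySp, mySm} := by
      ext C
      simp only [Set.mem_setOf_eq, Set.mem_insert_iff, Set.mem_singleton_iff]
      constructor
      · rintro ⟨x, hxS, rfl⟩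
        rcases (Set.ext_iff.mp S_eq x).mp hxS with hx | hx
        · exact Or.inl (comp_p hx)
        · exact Or.inr (comp_m hx)
      · rintro (rfl | rfl)
        · exact ⟨(2, 1), (Set.ext_iff.mp S_eq _).mpr (Or.inl mem_Sp), (comp_p mem_Sp).symm⟩
        · exact ⟨(-2, 1), (Set.ext_iff.mp S_eq _).mpr (Or.inr mem_Sm), (comp_m mem_Sm).symm⟩
    rw [this]
    apply Set.ncard_pair
    intro h
    have := h ▸ mem_Sp
    exact absurd this.1 (by simp at this ⊢; nlinarith [s3_pos, this.1])
end

section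
/- Let V be a real vector space, T a symmetric trilinear form on V, and Δ, E ∈ V with T(Δ,Δ,E) = 0, T(Δ,E,E) < 0 and T(E,E,E) ≥ 0. If α > 0 and β > 0 are real numbers such that T(Δ−αE, Δ−αE, Δ−βE) ≥ 0, then α² < −T(Δ,Δ,Δ)/T(Δ,E,E). -/
theorem stmt16
    (V : Type*) [AddCommGroup V] [Module ℝ V]
    (T : V →ₗ[ℝ] V →ₗ[ℝ] V →ₗ[ℝ] ℝ)
    (hT1 : ∀ x y z : V, T x y z = T y x z)
    (hT2 : ∀ x y z : V, T x y z = T x z y)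
    (Δ E : V)
    (h1 : T Δ Δ E = 0) (h2 : T Δ E E < 0) (h3 : T E E E ≥ 0)
    (α β : ℝ) (hα : 0 < α) (hβ : 0 < β)
    (hmov : T (Δ - α • E) (Δ - α • E) (Δ - β • E) ≥ 0) :
    α ^ 2 < -T Δ Δ Δ / T Δ E E := by
  have hEΔΔ : T E Δ Δ = T Δ Δ E := by rw [hT1, hT2]
  have hΔEΔ : T Δ E Δ = T Δ Δ E := by rw [hT2]
  have hEΔE : T E Δ E = T Δ E E := by rw [hT1]
  have hEEΔ : T E E Δ = T Δ E E := by rw [hT2, hT1]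
  simp only [map_sub, map_smul, LinearMap.sub_apply, LinearMap.smul_apply,
    smul_eq_mul, hEΔΔ, hΔEΔ, hEΔE, hEEΔ, h1] at hmov
  rw [lt_div_iff_of_neg h2]
  nlinarith [mul_pos hα hβ, mul_pos hα hα, mul_nonneg (mul_nonneg hα.le hα.le) (mul_nonneg hβ.le h3)]
end
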